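/- Let K be a finite group, p a prime, q = p, W = {(x₁,…,x_p) ∈ Z(K)^p : x₁⋯x_p = 1}, U = K^p/W, and α the automorphism of U induced by the cyclic shift (x₁,…,x_p) ↦ (x_p,x₁,…,x_{p-1}) on K^p. Set H = U ⋊ ⟨α⟩. If K ≠ Z(K), then Z(H) = Z(U) and H/Z(H) ≅ (K/Z(K)) ≀ C_p. -/

import Mathlib

open scoped BigOperators
open scoped IsMulCommutative

variable (K : Type) [Group K]

/-- The product map `Z(K)^q → Z(K)`, a homomorphism since the center is commutative. -/
noncomputable def centerProdHom (q : ℕ) : (Fin q → Subgroup.center K) →* Subgroup.center K where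
  toFun x := ∏ i, x i
  map_one' := by simp
  map_mul' x y := by simp [Finset.prod_mul_distrib]

/-- The canonical embedding `Z(K)^q → K^q`. -/
noncomputable def centerPiEmbed (q : ℕ) : (Fin q → Subgroup.center K) →* (Fin q → K) :=
  Pi.monoidHom fun i => (Subgroup.center K).subtype.comp
    (Pi.evalMonoidHom (fun _ => Subgroup.center K) i)

/-- `W = {(x₁,…,x_q) ∈ Z(K)^q : x₁⋯x_q = 1}`, as a subgroup of `K^q`. -/
noncomputable def Wsub (q : ℕ) : Subgroup (Fin q → K) :=
  (centerProdHom K q).ker.map (centerPiEmbed K q)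

instance (q : ℕ) : (Wsub K q).Normal := by
  constructor
  rintro w hw g
  obtain ⟨y, hy, rfl⟩ := hw
  have h : g * centerPiEmbed K q y * g⁻¹ = centerPiEmbed K q y := by
    funext i
    show g i * (y i : K) * (g i)⁻¹ = (y i : K)
    rw [Subgroup.mem_center_iff.mp (y i).2 (g i), mul_inv_cancel_right]
  rw [h]
  exact ⟨y, hy, rfl⟩

/-- The cyclic shift automorphism `(x₁,…,x_p) ↦ (x_p,x₁,…,x_{p-1})` of `G^p`. -/
def shiftAut (G : Type) [Group G] (p : ℕ) [NeZero p] : MulAut (Fin p → G) where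
  toFun x := fun i => x (i - 1)
  invFun x := fun i => x (i + 1)
  left_inv x := by funext i; simp
  right_inv x := by funext i; simp
  map_mul' x y := rfl

/-- The cyclic shift preserves `W`. -/
theorem shift_maps_W (p : ℕ) [NeZero p] :
    (Wsub K p).map (shiftAut K p).toMonoidHom = Wsub K p := by
  ext w
  simp only [Wsub, Subgroup.mem_map]
  constructor
  · rintro ⟨v, ⟨y, hy, rfl⟩, rfl⟩
    refine ⟨fun i => y (i - 1), ?_, rfl⟩
    have h : ∏ i, y (i - 1) = ∏ i, y i :=
      Fintype.prod_equiv (Equiv.subRight (1 : Fin p)) _ _ (fun i => rfl)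
    simpa [MonoidHom.mem_ker, centerProdHom, h] using hy
  · rintro ⟨y, hy, rfl⟩
    refine ⟨centerPiEmbed K p fun i => y (i + 1), ⟨fun i => y (i + 1), ?_, rfl⟩, ?_⟩
    · have h : ∏ i, y (i + 1) = ∏ i, y i :=
        Fintype.prod_equiv (Equiv.addRight (1 : Fin p)) _ _ (fun i => rfl)
      simpa [MonoidHom.mem_ker, centerProdHom, h] using hy
    · funext i
      show ((y (i - 1 + 1) : K)) = (y i : K)
      rw [sub_add_cancel]

/-- The automorphism `α` of `U = K^p/W` induced by the cyclic shift. -/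
noncomputable def shiftAutU (p : ℕ) [NeZero p] :
    MulAut ((Fin p → K) ⧸ Wsub K p) :=
  QuotientGroup.congr (Wsub K p) (Wsub K p) (shiftAut K p) (shift_maps_W K p)

/-- `H = U ⋊ ⟨α⟩` where `U = K^p/W` and `α` is the induced shift automorphism. -/
noncomputable abbrev Hgrp (p : ℕ) [NeZero p] : Type :=
  ((Fin p → K) ⧸ Wsub K p) ⋊[(Subgroup.zpowers (shiftAutU K p)).subtype]
    (Subgroup.zpowers (shiftAutU K p))

/-- The regular wreath product `Q ≀ C_p`, realized as `Q^p ⋊ ⟨cyclic shift⟩`. -/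
noncomputable abbrev WreathCp (Q : Type) [Group Q] (p : ℕ) [NeZero p] : Type :=
  (Fin p → Q) ⋊[(Subgroup.zpowers (shiftAut Q p)).subtype] (Subgroup.zpowers (shiftAut Q p))

/-!
The coordinatewise projection `K^p → (K/Z(K))^p` kills `W`, so it induces a surjection
`π : U → (K/Z(K))^p` intertwining `α` with the cyclic shift. Its kernel is `Z(U)`: if `xW` is
central, its commutator with an element supported on the single coordinate `j` lies in `W` and is
supported on `j`, hence trivial, so `x_j ∈ Z(K)`. Since `K/Z(K)` is nontrivial, a power `α^k` is
trivial iff `p ∣ k` iff the same power of the shift on `(K/Z(K))^p` is, so `⟨α⟩ ≅ C_p` compatibly,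
and `π` extends to a surjection `H → (K/Z(K)) ≀ C_p` with kernel `Z(U)`. Finally `Z(H) = Z(U)`:
`α` fixes `Z(U)`, and if `(u, α^k)` is central then `π u` conjugates every `w` to `shift^k w`, which
forces `p ∣ k` by testing on `w` supported on one coordinate.
-/

open Fin.CommRing

section Generic

variable {G G' : Type*} [Group G] [Group G']

theorem MonoidHom.map_zpow_apply_of_map_apply (f : G →* G') {e : MulAut G} {e' : MulAut G'}
    (h : ∀ x, f (e x) = e' (f x)) (k : ℤ) (x : G) : f ((e ^ k) x) = (e' ^ k) (f x) := by
  have h_inv : ∀ x, f (e⁻¹ x) = e'⁻¹ (f x) := fun x => by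
    rw [← MulAut.inv_apply_self G' e' (f (e⁻¹ x)), ← h, MulAut.apply_inv_self]
  induction k using Int.induction_on generalizing x with
  | zero => rfl
  | succ n ih => rw [zpow_add_one, zpow_add_one, MulAut.mul_apply, MulAut.mul_apply, ih, h]
  | pred n ih => rw [zpow_sub_one, zpow_sub_one, MulAut.mul_apply, MulAut.mul_apply, ih, h_inv]

theorem ker_zpowersHom_eq_of_zpow_eq_one_iff {a : G} {b : G'}
    (h : ∀ k : ℤ, a ^ k = 1 ↔ b ^ k = 1) : (zpowersHom G a).ker = (zpowersHom G' b).ker := by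
  ext k
  simp [h]

noncomputable def zpowersMulEquivOfZpowEqOneIff {a : G} {b : G'}
    (h : ∀ k : ℤ, a ^ k = 1 ↔ b ^ k = 1) : Subgroup.zpowers a ≃* Subgroup.zpowers b :=
  (MulEquiv.subgroupCongr (Subgroup.range_zpowersHom a)).symm.trans <|
    (QuotientGroup.quotientKerEquivRange (zpowersHom G a)).symm.trans <|
      (QuotientGroup.quotientMulEquivOfEq (ker_zpowersHom_eq_of_zpow_eq_one_iff h)).trans <|
        (QuotientGroup.quotientKerEquivRange (zpowersHom G' b)).trans <|
          MulEquiv.subgroupCongr (Subgroup.range_zpowersHom b)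

theorem zpowersMulEquivOfZpowEqOneIff_apply {a : G} {b : G'}
    (h : ∀ k : ℤ, a ^ k = 1 ↔ b ^ k = 1) {σ : Subgroup.zpowers a} {k : ℤ} (hσ : (σ : G) = a ^ k) :
    (zpowersMulEquivOfZpowEqOneIff h σ : G') = b ^ k := by
  have hσ' : (QuotientGroup.quotientKerEquivRange (zpowersHom G a)).symm
      ((MulEquiv.subgroupCongr (Subgroup.range_zpowersHom a)).symm σ) =
      (Multiplicative.ofAdd k : Multiplicative ℤ) := by
    rw [MulEquiv.symm_apply_eq]
    exact Subtype.ext hσ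
  simp only [zpowersMulEquivOfZpowEqOneIff, MulEquiv.trans_apply, hσ']
  rfl

end Generic

section SemidirectProduct

variable {N G : Type*} [Group N] [Group G] {φ : G →* MulAut N}

theorem SemidirectProduct.mul_left_eq_of_mem_center {z : N ⋊[φ] G} (hz : z ∈ Subgroup.center _)
    (n : N) : n * z.left = z.left * φ z.right n := by
  simpa using congrArg SemidirectProduct.left (Subgroup.mem_center_iff.mp hz (inl n))

theorem SemidirectProduct.inl_mem_center {n : N} (hn : n ∈ Subgroup.center N)
    (hfix : ∀ g, φ g n = n) : inl n ∈ Subgroup.center (N ⋊[φ] G) :=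
  Subgroup.mem_center_iff.mpr fun z => SemidirectProduct.ext
    (by simp [hfix, Subgroup.mem_center_iff.mp hn]) (by simp)

variable {N₂ G₂ : Type*} [Group N₂] [Group G₂] {φ₂ : G₂ →* MulAut N₂}
  {fn : N →* N₂} {fg : G →* G₂}
  {h : ∀ g : G, fn.comp (φ g).toMonoidHom = (φ₂ (fg g)).toMonoidHom.comp fn}

theorem SemidirectProduct.ker_map_of_injective (hg : Function.Injective fg) :
    (map fn fg h).ker = fn.ker.map inl := by
  ext z
  refine ⟨fun hz => ⟨z.left, congrArg left hz, ?_⟩, ?_⟩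
  · have : fg z.right = fg 1 := by simpa using congrArg right hz
    exact SemidirectProduct.ext rfl (hg this).symm
  · rintro ⟨n, hn, rfl⟩
    exact SemidirectProduct.ext hn (map_one fg)

theorem SemidirectProduct.map_surjective (hn : Function.Surjective fn)
    (hg : Function.Surjective fg) : Function.Surjective (map fn fg h) := fun z => by
  obtain ⟨n, hn⟩ := hn z.left
  obtain ⟨g, hg⟩ := hg z.right
  exact ⟨⟨n, g⟩, SemidirectProduct.ext hn hg⟩

end SemidirectProduct

section Shift

variable {G : Type} [Group G] {p : ℕ} [NeZero p]

theorem shiftAut_zpow_apply (k : ℤ) (x : Fin p → G) (i : Fin p) :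
    (shiftAut G p ^ k) x i = x (i - k) := by
  induction k using Int.induction_on generalizing x i with
  | zero => simp
  | succ n ih =>
    rw [zpow_add_one, MulAut.mul_apply, ih]
    change x (i - n - 1) = _
    push_cast
    ring_nf
  | pred n ih =>
    rw [zpow_sub_one, MulAut.mul_apply, ih]
    change x (i - (-n : ℤ) + 1) = _
    push_cast
    ring_nf

theorem shiftAut_zpow_eq_one {k : ℤ} (hk : (k : Fin p) = 0) : shiftAut G p ^ k = 1 := by
  ext x i
  rw [shiftAut_zpow_apply, hk, sub_zero, MulAut.one_apply]

theorem intCast_eq_zero_of_forall_mul_eq_mul_shiftAut_zpow [Nontrivial G] {k : ℤ}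
    {c : Fin p → G} (h : ∀ w, w * c = c * (shiftAut G p ^ k) w) : (k : Fin p) = 0 := by
  by_contra hk
  obtain ⟨b, hb⟩ := exists_ne (1 : G)
  have h0 := congr_fun (h (Pi.mulSingle 0 b)) 0
  exact hb (by simpa [shiftAut_zpow_apply, hk] using h0)

theorem shiftAut_zpow_eq_one_iff [Nontrivial G] {k : ℤ} :
    shiftAut G p ^ k = 1 ↔ (k : Fin p) = 0 :=
  ⟨fun h => intCast_eq_zero_of_forall_mul_eq_mul_shiftAut_zpow (c := 1) fun w => by
      rw [h, mul_one, one_mul, MulAut.one_apply],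
    shiftAut_zpow_eq_one⟩

end Shift

section W

variable {p : ℕ}

theorem mem_Wsub_iff {w : Fin p → K} :
    w ∈ Wsub K p ↔
      ∃ hw : ∀ i, w i ∈ Subgroup.center K, ∏ i, (⟨w i, hw i⟩ : Subgroup.center K) = 1 := by
  constructor
  · rintro ⟨y, hy, rfl⟩
    exact ⟨fun i => (y i).2, hy⟩
  · rintro ⟨hw, hprod⟩
    exact ⟨fun i => ⟨w i, hw i⟩, hprod, rfl⟩

theorem apply_eq_one_of_mem_Wsub {w : Fin p → K} (hw : w ∈ Wsub K p) {j : Fin p}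
    (h : ∀ i, i ≠ j → w i = 1) : w j = 1 := by
  obtain ⟨hc, hprod⟩ := (mem_Wsub_iff K).mp hw
  rw [Finset.prod_eq_single j (fun i _ hij => Subtype.ext (h i hij)) (by simp)] at hprod
  exact congrArg Subtype.val hprod

theorem mk_mem_center_iff {x : Fin p → K} :
    (x : (Fin p → K) ⧸ Wsub K p) ∈ Subgroup.center ((Fin p → K) ⧸ Wsub K p) ↔
      ∀ i, x i ∈ Subgroup.center K := by
  refine ⟨fun hx j => Subgroup.mem_center_iff.mpr fun b => ?_, fun hx => ?_⟩
  · have hcomm := Subgroup.mem_center_iff.mp hx (Pi.mulSingle j b : Fin p → K)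
    rw [← QuotientGroup.mk_mul, ← QuotientGroup.mk_mul, QuotientGroup.eq] at hcomm
    have := apply_eq_one_of_mem_Wsub K hcomm (j := j) fun i hij => by simp [hij]
    simpa only [Pi.mul_apply, Pi.inv_apply, Pi.mulSingle_eq_same, inv_mul_eq_one] using this
  · refine Subgroup.mem_center_iff.mpr fun u => ?_
    obtain ⟨y, rfl⟩ := QuotientGroup.mk_surjective u
    rw [← QuotientGroup.mk_mul, ← QuotientGroup.mk_mul]
    congr 1
    funext i
    exact Subgroup.mem_center_iff.mp (hx i) (y i)

end W

section Quotient

variable (p : ℕ)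

noncomputable def toPiQuotCenter : (Fin p → K) ⧸ Wsub K p →* (Fin p → K ⧸ Subgroup.center K) :=
  QuotientGroup.lift (Wsub K p) ((QuotientGroup.mk' (Subgroup.center K)).compLeft (Fin p))
    fun _ hw => funext fun i => (QuotientGroup.eq_one_iff _).mpr (((mem_Wsub_iff K).mp hw).1 i)

theorem toPiQuotCenter_mk (x : Fin p → K) :
    toPiQuotCenter K p x = fun i => (x i : K ⧸ Subgroup.center K) := rfl

theorem toPiQuotCenter_surjective : Function.Surjective (toPiQuotCenter K p) :=
  QuotientGroup.lift_surjective_of_surjective _ _ (QuotientGroup.mk_surjective.comp_left) _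

theorem toPiQuotCenter_eq_one_iff {u : (Fin p → K) ⧸ Wsub K p} :
    toPiQuotCenter K p u = 1 ↔ u ∈ Subgroup.center ((Fin p → K) ⧸ Wsub K p) := by
  obtain ⟨x, rfl⟩ := QuotientGroup.mk_surjective u
  simp [toPiQuotCenter_mk, mk_mem_center_iff, funext_iff]

variable [NeZero p]

theorem shiftAutU_mk (x : Fin p → K) :
    shiftAutU K p (x : (Fin p → K) ⧸ Wsub K p) = (shiftAut K p x : (Fin p → K) ⧸ Wsub K p) :=
  QuotientGroup.congr_mk _ _ _ _ x

theorem shiftAutU_zpow_mk (k : ℤ) (x : Fin p → K) :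
    (shiftAutU K p ^ k) (x : (Fin p → K) ⧸ Wsub K p) =
      ((shiftAut K p ^ k) x : (Fin p → K) ⧸ Wsub K p) :=
  ((QuotientGroup.mk' (Wsub K p)).map_zpow_apply_of_map_apply
    (fun x => (shiftAutU_mk K p x).symm) k x).symm

theorem shiftAutU_apply_of_mem_center {u : (Fin p → K) ⧸ Wsub K p}
    (hu : u ∈ Subgroup.center ((Fin p → K) ⧸ Wsub K p)) : shiftAutU K p u = u := by
  obtain ⟨x, rfl⟩ := QuotientGroup.mk_surjective u
  have hx := (mk_mem_center_iff K).mp hu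
  rw [shiftAutU_mk, QuotientGroup.eq, mem_Wsub_iff]
  refine ⟨fun i => mul_mem (inv_mem (hx (i - 1))) (hx i), ?_⟩
  let y : Fin p → Subgroup.center K := fun i => ⟨x i, hx i⟩
  calc ∏ i, (⟨(shiftAut K p x)⁻¹ i * x i, _⟩ : Subgroup.center K)
      = ∏ i, (y (i - 1))⁻¹ * y i := rfl
    _ = (∏ i, y i)⁻¹ * ∏ i, y i := by
      rw [Finset.prod_mul_distrib, Finset.prod_inv_distrib,
        Fintype.prod_equiv (Equiv.subRight 1) (fun i => y (i - 1)) y fun _ => rfl]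
    _ = 1 := inv_mul_cancel _

theorem toPiQuotCenter_shiftAutU_zpow (k : ℤ) (u : (Fin p → K) ⧸ Wsub K p) :
    toPiQuotCenter K p ((shiftAutU K p ^ k) u) =
      (shiftAut (K ⧸ Subgroup.center K) p ^ k) (toPiQuotCenter K p u) := by
  refine (toPiQuotCenter K p).map_zpow_apply_of_map_apply (fun u => ?_) k u
  obtain ⟨x, rfl⟩ := QuotientGroup.mk_surjective u
  rw [shiftAutU_mk]
  rfl

theorem shiftAutU_zpow_eq_one_iff (hK : Subgroup.center K ≠ ⊤) {k : ℤ} :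
    shiftAutU K p ^ k = 1 ↔ shiftAut (K ⧸ Subgroup.center K) p ^ k = 1 := by
  have := QuotientGroup.nontrivial_iff.mpr hK
  refine ⟨fun h => MulEquiv.ext fun w => ?_, fun h => MulEquiv.ext fun u => ?_⟩
  · obtain ⟨u, rfl⟩ := toPiQuotCenter_surjective K p w
    rw [← toPiQuotCenter_shiftAutU_zpow, h, MulAut.one_apply, MulAut.one_apply]
  · obtain ⟨x, rfl⟩ := QuotientGroup.mk_surjective u
    rw [shiftAutU_zpow_mk, shiftAut_zpow_eq_one (shiftAut_zpow_eq_one_iff.mp h),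
      MulAut.one_apply, MulAut.one_apply]

end Quotient

section Hgrp

variable {K} {p : ℕ} [NeZero p]

theorem center_Hgrp (hK : Subgroup.center K ≠ ⊤) :
    Subgroup.center (Hgrp K p) =
      (Subgroup.center ((Fin p → K) ⧸ Wsub K p)).map SemidirectProduct.inl := by
  ext z
  refine ⟨fun hz => ?_, ?_⟩
  · have hcomm := SemidirectProduct.mul_left_eq_of_mem_center hz
    obtain ⟨k, hk⟩ := Subgroup.mem_zpowers_iff.mp z.right.2
    have hQ : ∀ w, w * toPiQuotCenter K p z.left =
        toPiQuotCenter K p z.left * (shiftAut (K ⧸ Subgroup.center K) p ^ k) w := fun w => by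
      obtain ⟨v, rfl⟩ := toPiQuotCenter_surjective K p w
      simpa [← toPiQuotCenter_shiftAutU_zpow, hk] using congrArg (toPiQuotCenter K p) (hcomm v)
    have : Nontrivial (K ⧸ Subgroup.center K) := QuotientGroup.nontrivial_iff.mpr hK
    have hright : z.right = 1 := OneMemClass.coe_eq_one.mp <| by
      rw [← hk, shiftAutU_zpow_eq_one_iff K p hK, shiftAut_zpow_eq_one_iff]
      exact intCast_eq_zero_of_forall_mul_eq_mul_shiftAut_zpow hQ
    refine ⟨z.left, Subgroup.mem_center_iff.mpr fun v => ?_, SemidirectProduct.ext rfl hright.symm⟩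
    simpa [hright] using hcomm v
  · rintro ⟨u, hu, rfl⟩
    refine SemidirectProduct.inl_mem_center hu fun σ => ?_
    obtain ⟨k, hk⟩ := Subgroup.mem_zpowers_iff.mp σ.2
    change (σ : MulAut _) u = u
    rw [← hk]
    have hfix : shiftAutU K p ∈ MulAction.stabilizer (MulAut ((Fin p → K) ⧸ Wsub K p)) u :=
      shiftAutU_apply_of_mem_center K p hu
    exact zpow_mem hfix k

noncomputable def hgrpToWreath (hK : Subgroup.center K ≠ ⊤) :
    Hgrp K p →* WreathCp (K ⧸ Subgroup.center K) p :=
  SemidirectProduct.map (toPiQuotCenter K p)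
    (zpowersMulEquivOfZpowEqOneIff fun _ => shiftAutU_zpow_eq_one_iff K p hK).toMonoidHom
    fun σ => by
      obtain ⟨k, hk⟩ := Subgroup.mem_zpowers_iff.mp σ.2
      refine MonoidHom.ext fun u => ?_
      simp only [MonoidHom.comp_apply, MulEquiv.coe_toMonoidHom, Subgroup.coe_subtype]
      rw [zpowersMulEquivOfZpowEqOneIff_apply _ hk.symm, ← hk, toPiQuotCenter_shiftAutU_zpow]

theorem hgrpToWreath_surjective (hK : Subgroup.center K ≠ ⊤) :
    Function.Surjective (hgrpToWreath (p := p) hK) :=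
  SemidirectProduct.map_surjective (toPiQuotCenter_surjective K p) (MulEquiv.surjective _)

theorem ker_hgrpToWreath (hK : Subgroup.center K ≠ ⊤) :
    (hgrpToWreath (p := p) hK).ker =
      (Subgroup.center ((Fin p → K) ⧸ Wsub K p)).map SemidirectProduct.inl := by
  rw [hgrpToWreath, SemidirectProduct.ker_map_of_injective (MulEquiv.injective _)]
  congr 1
  ext u
  exact toPiQuotCenter_eq_one_iff K p

end Hgrp

theorem center_and_quotient_of_shift_extension (p : ℕ) [NeZero p]
    (hK : Subgroup.center K ≠ ⊤) :
    Subgroup.center (Hgrp K p) =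
      (Subgroup.center ((Fin p → K) ⧸ Wsub K p)).map SemidirectProduct.inl ∧
    Nonempty ((Hgrp K p ⧸ Subgroup.center (Hgrp K p)) ≃* WreathCp (K ⧸ Subgroup.center K) p) :=
  ⟨center_Hgrp hK,
    ⟨(QuotientGroup.quotientMulEquivOfEq ((center_Hgrp hK).trans (ker_hgrpToWreath hK).symm)).trans
      (QuotientGroup.quotientKerEquivOfSurjective _ (hgrpToWreath_surjective hK))⟩⟩
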